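/- Under the hypotheses of the previous energy estimate (gradient discretisation (X, Π, ∇_D), diffusion tensor Λ₁ with lower eigenvalue bound λ̲₁ > 0, reaction F₁ Lipschitz with constant L in the sense |F₁(a,b) − F₁(a',b')| ≤ L(|a−a'| + |b−b'|), δt > 0, u₀ ∈ X, and u, ũ ∈ X solving the linearised one-step problems with reaction sources F₁(Πw₁, Πw₂) and F₁(Πw̃₁, Πw̃₂) respectively and the same u₀), one has ‖∇_D(u − ũ)‖_{L²(Ω)^d} ≤ (√2 L / 2) √(δt/λ̲₁) (‖Π(w₁ − w̃₁)‖_{L²(Ω)} + ‖Π(w₂ − w̃₂)‖_{L²(Ω)}). -/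

import Mathlib

open MeasureTheory Matrix

/-- The bilinear form `A a · b` associated with a `d × d` real matrix. -/
noncomputable def qf {d : ℕ} (A : Matrix (Fin d) (Fin d) ℝ)
    (a b : EuclideanSpace ℝ (Fin d)) : ℝ :=
  A.mulVec (EuclideanSpace.equiv (Fin d) ℝ a) ⬝ᵥ (EuclideanSpace.equiv (Fin d) ℝ b)

section helpers

lemma qf_sub_left {d : ℕ} (A : Matrix (Fin d) (Fin d) ℝ) (a b c : EuclideanSpace ℝ (Fin d)) :
    qf A (a - b) c = qf A a c - qf A b c := by
  simp [qf, Matrix.mulVec_sub, sub_dotProduct]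

lemma qf_add_left {d : ℕ} (A : Matrix (Fin d) (Fin d) ℝ) (a b c : EuclideanSpace ℝ (Fin d)) :
    qf A (a + b) c = qf A a c + qf A b c := by
  simp [qf, Matrix.mulVec_add, add_dotProduct]

lemma qf_add_right {d : ℕ} (A : Matrix (Fin d) (Fin d) ℝ) (a b c : EuclideanSpace ℝ (Fin d)) :
    qf A a (b + c) = qf A a b + qf A a c := by
  simp [qf, dotProduct_add]

lemma qf_smul_left {d : ℕ} (A : Matrix (Fin d) (Fin d) ℝ) (t : ℝ) (a c : EuclideanSpace ℝ (Fin d)) :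
    qf A (t • a) c = t * qf A a c := by
  simp [qf, Matrix.mulVec_smul, smul_dotProduct]

lemma qf_smul_right {d : ℕ} (A : Matrix (Fin d) (Fin d) ℝ) (t : ℝ) (a c : EuclideanSpace ℝ (Fin d)) :
    qf A a (t • c) = t * qf A a c := by
  simp [qf, dotProduct_smul]

lemma qf_symm {d : ℕ} {A : Matrix (Fin d) (Fin d) ℝ} (hA : A.IsSymm)
    (a b : EuclideanSpace ℝ (Fin d)) : qf A a b = qf A b a := by
  unfold qf
  rw [dotProduct_comm, Matrix.dotProduct_mulVec, ← Matrix.mulVec_transpose, hA.eq]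

lemma qf_abs_le {d : ℕ} {A : Matrix (Fin d) (Fin d) ℝ} {hi : ℝ} (hhi : 0 ≤ hi)
    (hA : A.IsSymm)
    (h : ∀ ξ : EuclideanSpace ℝ (Fin d), 0 ≤ qf A ξ ξ ∧ qf A ξ ξ ≤ hi * ‖ξ‖ ^ 2)
    (a b : EuclideanSpace ℝ (Fin d)) : |qf A a b| ≤ hi * (‖a‖ * ‖b‖) := by
  have hexp : ∀ t : ℝ, 0 ≤ qf A b b * (t * t) + (2 * qf A a b) * t + qf A a a := by
    intro t
    have h0 := (h (a + t • b)).1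
    simp only [qf_add_left, qf_add_right, qf_smul_left, qf_smul_right, qf_symm hA b a] at h0
    nlinarith [h0]
  have hd := discrim_le_zero hexp
  rw [discrim] at hd
  have h1 : qf A a b ^ 2 ≤ (hi * ‖a‖ ^ 2) * (hi * ‖b‖ ^ 2) := by
    nlinarith [(h a).1, (h a).2, (h b).1, (h b).2]
  calc |qf A a b| = Real.sqrt ((qf A a b) ^ 2) := (Real.sqrt_sq_eq_abs _).symm
    _ ≤ Real.sqrt ((hi * (‖a‖ * ‖b‖)) ^ 2) := Real.sqrt_le_sqrt (by nlinarith)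
    _ = hi * (‖a‖ * ‖b‖) := Real.sqrt_sq (by positivity)

variable {α : Type*} [MeasurableSpace α] {μ : Measure α}
variable {E : Type*} [NormedAddCommGroup E] [InnerProductSpace ℝ E]

lemma l2_mul_integrable {f g : α → ℝ} (hf : MemLp f 2 μ) (hg : MemLp g 2 μ) :
    Integrable (fun x => f x * g x) μ := by
  refine (hf.integrable_sq.add hg.integrable_sq).mono'
    (hf.aestronglyMeasurable.mul hg.aestronglyMeasurable) ?_
  filter_upwards with x
  simp only [Real.norm_eq_abs, abs_mul, Pi.add_apply]
  nlinarith [sq_nonneg (|f x| - |g x|), abs_nonneg (f x), abs_nonneg (g x),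
    sq_abs (f x), sq_abs (g x)]

lemma lp_norm_abs (f : Lp ℝ 2 μ) : ‖(|f| : Lp ℝ 2 μ)‖ = ‖f‖ := by
  rw [Lp.norm_def, Lp.norm_def, eLpNorm_congr_ae (Lp.coeFn_abs f)]
  congr 1
  rw [← eLpNorm_norm (f : α → ℝ)]
  simp only [Real.norm_eq_abs]

lemma l2_inner_eq (f g : Lp ℝ 2 μ) : (inner ℝ f g : ℝ) = ∫ x, f x * g x ∂μ := by
  rw [L2.inner_def]
  apply integral_congr_ae
  filter_upwards with x
  simp [RCLike.inner_apply, mul_comm]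

lemma l2_cs (f g : Lp ℝ 2 μ) : ∫ x, |f x| * |g x| ∂μ ≤ ‖f‖ * ‖g‖ := by
  have h1 : (inner ℝ (|f| : Lp ℝ 2 μ) (|g| : Lp ℝ 2 μ) : ℝ) = ∫ x, |f x| * |g x| ∂μ := by
    rw [l2_inner_eq]
    apply integral_congr_ae
    filter_upwards [Lp.coeFn_abs f, Lp.coeFn_abs g] with x hx hy
    rw [hx, hy]
  rw [← h1, ← lp_norm_abs f, ← lp_norm_abs g]
  exact real_inner_le_norm _ _

lemma l2_norm_sq (f : Lp E 2 μ) : ‖f‖ ^ 2 = ∫ x, ‖f x‖ ^ 2 ∂μ := by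
  rw [← real_inner_self_eq_norm_sq, L2.inner_def]
  apply integral_congr_ae
  filter_upwards with x
  rw [real_inner_self_eq_norm_sq]

end helpers

set_option maxHeartbeats 1000000 in
/-- for two solutions `u, u'` of the linearised one-step gradient scheme with
reaction sources `F₁(Πw₁, Πw₂)` and `F₁(Πw₁', Πw₂')` and the same initial datum `u₀`,
`‖∇_D(u − u')‖ ≤ (√2 L/2) √(δt/λ̲₁) (‖Π(w₁ − w₁')‖ + ‖Π(w₂ − w₂')‖)`. -/
theorem stmt4 {d : ℕ} (Ω : Set (EuclideanSpace ℝ (Fin d)))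
    (hΩmeas : MeasurableSet Ω) (hΩbdd : Bornology.IsBounded Ω)
    (X : Type*) [AddCommGroup X] [Module ℝ X] [FiniteDimensional ℝ X]
    (Pi : X →ₗ[ℝ] Lp ℝ 2 (volume.restrict Ω))
    (grad : X →ₗ[ℝ] Lp (EuclideanSpace ℝ (Fin d)) 2 (volume.restrict Ω))
    (hgradinj : Function.Injective grad)
    (Λ₁ : EuclideanSpace ℝ (Fin d) → Matrix (Fin d) (Fin d) ℝ)
    (hΛmeas : ∀ i j, Measurable fun x => Λ₁ x i j)
    (lo₁ hi₁ : ℝ) (hlo : 0 < lo₁) (hlohi : lo₁ ≤ hi₁)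
    (hΛsym : ∀ᵐ x ∂(volume.restrict Ω), (Λ₁ x).IsSymm)
    (hΛell : ∀ᵐ x ∂(volume.restrict Ω), ∀ ξ : EuclideanSpace ℝ (Fin d),
      lo₁ * ‖ξ‖ ^ 2 ≤ qf (Λ₁ x) ξ ξ ∧ qf (Λ₁ x) ξ ξ ≤ hi₁ * ‖ξ‖ ^ 2)
    (F₁ : ℝ → ℝ → ℝ) (L : ℝ)
    (hF₁ : ∀ a a' b b' : ℝ, |F₁ a b - F₁ a' b'| ≤ L * (|a - a'| + |b - b'|))
    (δt : ℝ) (hδt : 0 < δt) (u₀ : X) (w₁ w₂ w₁' w₂' : X) (u u' : X)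
    (hu : ∀ φ : X,
      (1 / δt) * (∫ x, (Pi (u - u₀)) x * (Pi φ) x ∂(volume.restrict Ω))
        + (∫ x, qf (Λ₁ x) ((grad u) x) ((grad φ) x) ∂(volume.restrict Ω))
      = ∫ x, F₁ ((Pi w₁) x) ((Pi w₂) x) * (Pi φ) x ∂(volume.restrict Ω))
    (hu' : ∀ φ : X,
      (1 / δt) * (∫ x, (Pi (u' - u₀)) x * (Pi φ) x ∂(volume.restrict Ω))
        + (∫ x, qf (Λ₁ x) ((grad u') x) ((grad φ) x) ∂(volume.restrict Ω))
      = ∫ x, F₁ ((Pi w₁') x) ((Pi w₂') x) * (Pi φ) x ∂(volume.restrict Ω)) :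
    ‖grad (u - u')‖ ≤
      (Real.sqrt 2 * L / 2) * Real.sqrt (δt / lo₁) * (‖Pi (w₁ - w₁')‖ + ‖Pi (w₂ - w₂')‖) := by
  haveI : IsFiniteMeasure (volume.restrict Ω : Measure (EuclideanSpace ℝ (Fin d))) := by
    constructor
    rw [Measure.restrict_apply_univ]
    exact hΩbdd.measure_lt_top
  have hL0 : 0 ≤ L := by
    have h := hF₁ 0 1 0 0
    have h0 := abs_nonneg (F₁ 0 0 - F₁ 1 0)
    simp at h
    linarith
  have hhi : (0:ℝ) < hi₁ := lt_of_lt_of_le hlo hlohi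
  -- refined a.e. ellipticity
  have hΛ : ∀ᵐ x ∂(volume.restrict Ω), ∀ ξ : EuclideanSpace ℝ (Fin d),
      0 ≤ qf (Λ₁ x) ξ ξ ∧ qf (Λ₁ x) ξ ξ ≤ hi₁ * ‖ξ‖ ^ 2 := by
    filter_upwards [hΛell] with x hx ξ
    exact ⟨le_trans (by positivity) (hx ξ).1, (hx ξ).2⟩
  -- measurability of qf integrands
  have qmeas : ∀ f g : Lp (EuclideanSpace ℝ (Fin d)) 2 (volume.restrict Ω),
      AEStronglyMeasurable (fun x => qf (Λ₁ x) (f x) (g x)) (volume.restrict Ω) := by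
    intro f g
    have hf := Lp.aestronglyMeasurable f
    have hg := Lp.aestronglyMeasurable g
    have hfc : ∀ i, AEStronglyMeasurable (fun x => f x i) (volume.restrict Ω) := fun i =>
      ((continuous_apply i).comp (PiLp.continuous_ofLp 2 _)).comp_aestronglyMeasurable hf
    have hgc : ∀ i, AEStronglyMeasurable (fun x => g x i) (volume.restrict Ω) := fun i =>
      ((continuous_apply i).comp (PiLp.continuous_ofLp 2 _)).comp_aestronglyMeasurable hg
    have hrw : (fun x => qf (Λ₁ x) (f x) (g x))
        = fun x => ∑ j, (∑ i, Λ₁ x j i * f x i) * g x j := by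
      funext x
      rfl
    rw [hrw]
    exact Finset.aestronglyMeasurable_fun_sum _ fun j _ =>
      (Finset.aestronglyMeasurable_fun_sum _ fun i _ =>
        ((hΛmeas j i).aestronglyMeasurable.mul (hfc i))).mul (hgc j)
  -- integrability of qf integrands
  have hcross : ∀ f g : Lp (EuclideanSpace ℝ (Fin d)) 2 (volume.restrict Ω),
      Integrable (fun x => qf (Λ₁ x) (f x) (g x)) (volume.restrict Ω) := by
    intro f g
    have hb : Integrable (fun x => hi₁ * (‖f x‖ * ‖g x‖)) (volume.restrict Ω) :=
      (l2_mul_integrable (Lp.memLp f).norm (Lp.memLp g).norm).const_mul hi₁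
    refine hb.mono' (qmeas f g) ?_
    filter_upwards [hΛsym, hΛ] with x hs he
    rw [Real.norm_eq_abs]
    exact qf_abs_le hhi.le hs he (f x) (g x)
  -- lower bound for the diagonal diffusion term
  have hdiag_lb : lo₁ * ‖grad (u - u')‖ ^ 2
      ≤ ∫ x, qf (Λ₁ x) ((grad (u - u')) x) ((grad (u - u')) x) ∂(volume.restrict Ω) := by
    have hint1 : Integrable (fun x => lo₁ * ‖(grad (u - u')) x‖ ^ 2) (volume.restrict Ω) :=
      ((Lp.memLp (grad (u - u'))).norm.integrable_sq).const_mul lo₁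
    have h2 : ∫ x, lo₁ * ‖(grad (u - u')) x‖ ^ 2 ∂(volume.restrict Ω)
        = lo₁ * ‖grad (u - u')‖ ^ 2 := by
      rw [integral_const_mul, ← l2_norm_sq]
    rw [← h2]
    refine integral_mono_ae hint1 (hcross _ _) ?_
    filter_upwards [hΛell] with x hx
    exact (hx _).1
  -- mass term identity
  have hmass : (∫ x, (Pi (u - u₀)) x * (Pi (u - u')) x ∂(volume.restrict Ω))
      - (∫ x, (Pi (u' - u₀)) x * (Pi (u - u')) x ∂(volume.restrict Ω))
      = ‖Pi (u - u')‖ ^ 2 := by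
    rw [← l2_inner_eq, ← l2_inner_eq, ← inner_sub_left]
    have e1 : Pi (u - u₀) - Pi (u' - u₀) = Pi (u - u') := by
      rw [← map_sub]
      congr 1
      abel
    rw [e1, real_inner_self_eq_norm_sq]
  -- continuity of F₁
  have hFcont : Continuous fun p : ℝ × ℝ => F₁ p.1 p.2 := by
    have hlip : LipschitzWith (Real.toNNReal (2 * L)) (fun p : ℝ × ℝ => F₁ p.1 p.2) := by
      apply LipschitzWith.of_dist_le_mul
      intro p q
      have h := hF₁ p.1 q.1 p.2 q.2
      have h1 : |p.1 - q.1| ≤ dist p q := by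
        rw [← Real.dist_eq, Prod.dist_eq]
        exact le_max_left _ _
      have h2 : |p.2 - q.2| ≤ dist p q := by
        rw [← Real.dist_eq, Prod.dist_eq]
        exact le_max_right _ _
      have hc : (Real.toNNReal (2 * L) : ℝ) = 2 * L := Real.coe_toNNReal _ (by linarith)
      rw [Real.dist_eq, hc]
      calc |F₁ p.1 p.2 - F₁ q.1 q.2| ≤ L * (|p.1 - q.1| + |p.2 - q.2|) := h
        _ ≤ L * (dist p q + dist p q) := by
            apply mul_le_mul_of_nonneg_left _ hL0
            linarith
        _ = 2 * L * dist p q := by ring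
    exact hlip.continuous
  -- F₁ composed with reconstructions is in L²
  have hFm : ∀ a b : X, MemLp (fun x => F₁ ((Pi a) x) ((Pi b) x)) 2 (volume.restrict Ω) := by
    intro a b
    have hmeas : AEStronglyMeasurable (fun x => F₁ ((Pi a) x) ((Pi b) x)) (volume.restrict Ω) :=
      hFcont.comp_aestronglyMeasurable
        ((Lp.aestronglyMeasurable (Pi a)).prodMk (Lp.aestronglyMeasurable (Pi b)))
    have hbd : MemLp (fun x => |F₁ 0 0| + L * (|(Pi a) x| + |(Pi b) x|)) 2 (volume.restrict Ω) := by
      refine MemLp.add (f := fun _ => |F₁ 0 0|) (g := fun x => L * (|(Pi a) x| + |(Pi b) x|))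
        (memLp_const _) (MemLp.const_mul (f := fun x => |(Pi a) x| + |(Pi b) x|) ?_ L)
      exact (Lp.memLp (Pi a)).abs.add (Lp.memLp (Pi b)).abs
    refine hbd.of_le hmeas ?_
    filter_upwards with x
    have h := hF₁ ((Pi a) x) 0 ((Pi b) x) 0
    simp only [sub_zero] at h
    rw [Real.norm_eq_abs, Real.norm_eq_abs]
    have habs : |F₁ ((Pi a) x) ((Pi b) x)| ≤ |F₁ 0 0| + L * (|(Pi a) x| + |(Pi b) x|) := by
      have ht := abs_sub_abs_le_abs_sub (F₁ ((Pi a) x) ((Pi b) x)) (F₁ 0 0)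
      linarith
    exact habs.trans (le_abs_self _)
  have hFint : ∀ a b : X,
      Integrable (fun x => F₁ ((Pi a) x) ((Pi b) x) * (Pi (u - u')) x) (volume.restrict Ω) :=
    fun a b => l2_mul_integrable (hFm a b) (Lp.memLp (Pi (u - u')))
  -- subtracted equation
  have hEq : (1 / δt) * ‖Pi (u - u')‖ ^ 2
      + (∫ x, qf (Λ₁ x) ((grad (u - u')) x) ((grad (u - u')) x) ∂(volume.restrict Ω))
      = ∫ x, (F₁ ((Pi w₁) x) ((Pi w₂) x) - F₁ ((Pi w₁') x) ((Pi w₂') x)) * (Pi (u - u')) x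
          ∂(volume.restrict Ω) := by
    have k1 := hu (u - u')
    have k2 := hu' (u - u')
    have hB : (∫ x, qf (Λ₁ x) ((grad u) x) ((grad (u - u')) x) ∂(volume.restrict Ω))
        - (∫ x, qf (Λ₁ x) ((grad u') x) ((grad (u - u')) x) ∂(volume.restrict Ω))
        = ∫ x, qf (Λ₁ x) ((grad (u - u')) x) ((grad (u - u')) x) ∂(volume.restrict Ω) := by
      rw [← integral_sub (hcross (grad u) (grad (u - u'))) (hcross (grad u') (grad (u - u')))]
      apply integral_congr_ae
      have hg : (grad (u - u') : _ → _) =ᵐ[volume.restrict Ω]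
          fun x => (grad u) x - (grad u') x := by
        rw [map_sub]
        exact Lp.coeFn_sub _ _
      filter_upwards [hg] with x hx
      rw [← qf_sub_left, hx]
    have hF : (∫ x, F₁ ((Pi w₁) x) ((Pi w₂) x) * (Pi (u - u')) x ∂(volume.restrict Ω))
        - (∫ x, F₁ ((Pi w₁') x) ((Pi w₂') x) * (Pi (u - u')) x ∂(volume.restrict Ω))
        = ∫ x, (F₁ ((Pi w₁) x) ((Pi w₂) x) - F₁ ((Pi w₁') x) ((Pi w₂') x)) * (Pi (u - u')) x
            ∂(volume.restrict Ω) := by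
      rw [← integral_sub (hFint w₁ w₂) (hFint w₁' w₂')]
      apply integral_congr_ae
      filter_upwards with x
      ring
    linear_combination k1 - k2 - (1 / δt) * hmass - hB + hF
  -- coefficient-function identities for the differences
  have hw1 : (Pi (w₁ - w₁') : _ → ℝ) =ᵐ[volume.restrict Ω] fun x => (Pi w₁) x - (Pi w₁') x := by
    rw [map_sub]; exact Lp.coeFn_sub _ _
  have hw2 : (Pi (w₂ - w₂') : _ → ℝ) =ᵐ[volume.restrict Ω] fun x => (Pi w₂) x - (Pi w₂') x := by
    rw [map_sub]; exact Lp.coeFn_sub _ _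
  -- bound on the right-hand side
  have hRHS : (∫ x, (F₁ ((Pi w₁) x) ((Pi w₂) x) - F₁ ((Pi w₁') x) ((Pi w₂') x)) * (Pi (u - u')) x
        ∂(volume.restrict Ω))
      ≤ L * ((‖Pi (w₁ - w₁')‖ + ‖Pi (w₂ - w₂')‖) * ‖Pi (u - u')‖) := by
    have hGint : Integrable (fun x =>
        (F₁ ((Pi w₁) x) ((Pi w₂) x) - F₁ ((Pi w₁') x) ((Pi w₂') x)) * (Pi (u - u')) x)
        (volume.restrict Ω) := by
      have := (hFint w₁ w₂).sub (hFint w₁' w₂')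
      refine this.congr ?_
      filter_upwards with x
      exact (sub_mul _ _ _).symm
    have hint1 : Integrable (fun x => |(Pi (w₁ - w₁')) x| * |(Pi (u - u')) x|)
        (volume.restrict Ω) := l2_mul_integrable (Lp.memLp _).abs (Lp.memLp _).abs
    have hint2 : Integrable (fun x => |(Pi (w₂ - w₂')) x| * |(Pi (u - u')) x|)
        (volume.restrict Ω) := l2_mul_integrable (Lp.memLp _).abs (Lp.memLp _).abs
    calc (∫ x, (F₁ ((Pi w₁) x) ((Pi w₂) x) - F₁ ((Pi w₁') x) ((Pi w₂') x)) * (Pi (u - u')) x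
          ∂(volume.restrict Ω))
        ≤ ∫ x, L * (|(Pi (w₁ - w₁')) x| * |(Pi (u - u')) x|
            + |(Pi (w₂ - w₂')) x| * |(Pi (u - u')) x|) ∂(volume.restrict Ω) := by
          refine integral_mono_ae hGint ((hint1.add hint2).const_mul L) ?_
          filter_upwards [hw1, hw2] with x h1 h2
          have hb := hF₁ ((Pi w₁) x) ((Pi w₁') x) ((Pi w₂) x) ((Pi w₂') x)
          have hle : (F₁ ((Pi w₁) x) ((Pi w₂) x) - F₁ ((Pi w₁') x) ((Pi w₂') x)) * (Pi (u - u')) x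
              ≤ |(F₁ ((Pi w₁) x) ((Pi w₂) x) - F₁ ((Pi w₁') x) ((Pi w₂') x))| * |(Pi (u - u')) x| := by
            rw [← abs_mul]
            exact le_abs_self _
          refine hle.trans ?_
          rw [h1, h2]
          have := mul_le_mul_of_nonneg_right hb (abs_nonneg ((Pi (u - u')) x))
          calc |F₁ ((Pi w₁) x) ((Pi w₂) x) - F₁ ((Pi w₁') x) ((Pi w₂') x)| * |(Pi (u - u')) x|
              ≤ L * (|(Pi w₁) x - (Pi w₁') x| + |(Pi w₂) x - (Pi w₂') x|) * |(Pi (u - u')) x| := this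
            _ = L * (|(Pi w₁) x - (Pi w₁') x| * |(Pi (u - u')) x|
                + |(Pi w₂) x - (Pi w₂') x| * |(Pi (u - u')) x|) := by ring
      _ = L * ((∫ x, |(Pi (w₁ - w₁')) x| * |(Pi (u - u')) x| ∂(volume.restrict Ω))
            + ∫ x, |(Pi (w₂ - w₂')) x| * |(Pi (u - u')) x| ∂(volume.restrict Ω)) := by
          rw [integral_const_mul, integral_add hint1 hint2]
      _ ≤ L * (‖Pi (w₁ - w₁')‖ * ‖Pi (u - u')‖ + ‖Pi (w₂ - w₂')‖ * ‖Pi (u - u')‖) := by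
          apply mul_le_mul_of_nonneg_left _ hL0
          exact add_le_add (l2_cs _ _) (l2_cs _ _)
      _ = L * ((‖Pi (w₁ - w₁')‖ + ‖Pi (w₂ - w₂')‖) * ‖Pi (u - u')‖) := by ring
  -- combine
  have hS0 : 0 ≤ ‖Pi (w₁ - w₁')‖ + ‖Pi (w₂ - w₂')‖ := by positivity
  have ht0 : 0 ≤ ‖Pi (u - u')‖ := norm_nonneg _
  have hkey : lo₁ * ‖grad (u - u')‖ ^ 2 + (1 / δt) * ‖Pi (u - u')‖ ^ 2
      ≤ L * ((‖Pi (w₁ - w₁')‖ + ‖Pi (w₂ - w₂')‖) * ‖Pi (u - u')‖) := by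
    linarith [hdiag_lb, hRHS, hEq]
  have young : ∀ a b c : ℝ, 0 < a → b * c ≤ a * b ^ 2 / 4 + c ^ 2 / a := by
    intro a b c ha
    rw [div_add_div _ _ (by norm_num : (4:ℝ) ≠ 0) ha.ne', le_div_iff₀ (by positivity)]
    nlinarith [sq_nonneg (a * b - 2 * c), ha]
  have hq1 : lo₁ * ‖grad (u - u')‖ ^ 2
      ≤ δt * L ^ 2 * (‖Pi (w₁ - w₁')‖ + ‖Pi (w₂ - w₂')‖) ^ 2 / 4 := by
    have hy := young δt (L * (‖Pi (w₁ - w₁')‖ + ‖Pi (w₂ - w₂')‖)) ‖Pi (u - u')‖ hδt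
    have he : (1 / δt) * ‖Pi (u - u')‖ ^ 2 = ‖Pi (u - u')‖ ^ 2 / δt := by ring
    nlinarith [hkey, hy, he]
  have hX : ‖grad (u - u')‖ ^ 2
      ≤ δt * L ^ 2 * (‖Pi (w₁ - w₁')‖ + ‖Pi (w₂ - w₂')‖) ^ 2 / (4 * lo₁) := by
    rw [le_div_iff₀ (show (0:ℝ) < 4 * lo₁ by positivity)]
    linarith [hq1]
  have h2 : Real.sqrt 2 ^ 2 = 2 := Real.sq_sqrt (by norm_num)
  have hqs : Real.sqrt (δt / lo₁) ^ 2 = δt / lo₁ := Real.sq_sqrt (by positivity)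
  have hR2 : ((Real.sqrt 2 * L / 2) * Real.sqrt (δt / lo₁)
        * (‖Pi (w₁ - w₁')‖ + ‖Pi (w₂ - w₂')‖)) ^ 2
      = δt * L ^ 2 * (‖Pi (w₁ - w₁')‖ + ‖Pi (w₂ - w₂')‖) ^ 2 / (2 * lo₁) := by
    have e1 : ((Real.sqrt 2 * L / 2) * Real.sqrt (δt / lo₁)
          * (‖Pi (w₁ - w₁')‖ + ‖Pi (w₂ - w₂')‖)) ^ 2
        = (Real.sqrt 2 ^ 2) * (Real.sqrt (δt / lo₁) ^ 2) * L ^ 2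
            * (‖Pi (w₁ - w₁')‖ + ‖Pi (w₂ - w₂')‖) ^ 2 / 4 := by ring
    rw [e1, h2, hqs]
    have hlon : lo₁ ≠ 0 := hlo.ne'
    field_simp
    ring
  have hfin : ‖grad (u - u')‖ ^ 2 ≤ ((Real.sqrt 2 * L / 2) * Real.sqrt (δt / lo₁)
      * (‖Pi (w₁ - w₁')‖ + ‖Pi (w₂ - w₂')‖)) ^ 2 := by
    rw [hR2]
    refine hX.trans ?_
    have hnum : 0 ≤ δt * L ^ 2 * (‖Pi (w₁ - w₁')‖ + ‖Pi (w₂ - w₂')‖) ^ 2 := by positivity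
    exact div_le_div_of_nonneg_left hnum (by linarith) (by linarith)
  calc ‖grad (u - u')‖ = Real.sqrt (‖grad (u - u')‖ ^ 2) := (Real.sqrt_sq (norm_nonneg _)).symm
    _ ≤ Real.sqrt (((Real.sqrt 2 * L / 2) * Real.sqrt (δt / lo₁)
        * (‖Pi (w₁ - w₁')‖ + ‖Pi (w₂ - w₂')‖)) ^ 2) := Real.sqrt_le_sqrt hfin
    _ = (Real.sqrt 2 * L / 2) * Real.sqrt (δt / lo₁)
        * (‖Pi (w₁ - w₁')‖ + ‖Pi (w₂ - w₂')‖) := Real.sqrt_sq (by positivity)
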